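/- Let K be a field, A = K[x_1,…,x_n] with n > 1 (so dim_K A_1 = n). If H is a k-dimensional subspace of A_1, then the subspace ⟨A_1 H⟩ of A_2 spanned by all products fh with f ∈ A_1 and h ∈ H has dimension kn − binom(k, 2). -/

import Mathlib

/-!
A linear automorphism `L` of the space `A₁` of linear forms extends to the algebra endomorphism
`X i ↦ L (X i)` of `A`, which is injective and preserves `A₁`. Choosing `L` to carry the span of
`k` of the variables `X i`, `i ∈ s`, onto `H`, we may therefore assume `H = ⟨X i | i ∈ s⟩`.
Then `⟨A₁ H⟩` has as a basis the monomials `X i * X j` whose unordered pair `{i, j}` meets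
`s`, i.e. all `binom(n + 1, 2)` quadratic monomials except the `binom(n - k + 1, 2)` ones in the
other variables, and `binom(n + 1, 2) - binom(n - k + 1, 2) = k n - binom(k, 2)`.
-/

open Module Submodule Finset

theorem Submodule.exists_linearEquiv_map_eq_of_finrank_eq {K V : Type*} [DivisionRing K]
    [AddCommGroup V] [Module K V] [FiniteDimensional K V] {p q : Submodule K V}
    (h : finrank K p = finrank K q) : ∃ L : V ≃ₗ[K] V, p.map (L : V →ₗ[K] V) = q := by
  obtain ⟨p', hp⟩ := p.exists_isCompl
  obtain ⟨q', hq⟩ := q.exists_isCompl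
  have h' : finrank K p' = finrank K q' := by
    have := p.finrank_add_eq_of_isCompl hp
    have := q.finrank_add_eq_of_isCompl hq
    omega
  let L := (prodEquivOfIsCompl p p' hp).symm ≪≫ₗ
    (LinearEquiv.ofFinrankEq p q h).prodCongr (LinearEquiv.ofFinrankEq p' q' h') ≪≫ₗ
    prodEquivOfIsCompl q q' hq
  have hle : p.map (L : V →ₗ[K] V) ≤ q := by
    rintro _ ⟨x, hx, rfl⟩
    simp [L, prodEquivOfIsCompl_symm_apply_left p p' hp ⟨x, hx⟩]
  refine ⟨L, eq_of_le_of_finrank_eq hle ?_⟩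
  rw [LinearEquiv.finrank_map_eq, h]

theorem Nat.choose_succ_two_sub_choose_succ_two {k n : ℕ} (h : k ≤ n) :
    (n + 1).choose 2 - (n - k + 1).choose 2 = k * n - k.choose 2 := by
  -- `h₁` and `h₂` let `exact_mod_cast` move the truncated subtractions to `ℚ`.
  have h₁ : (n - k + 1).choose 2 ≤ (n + 1).choose 2 := Nat.choose_le_choose 2 (by omega)
  have h₂ : k.choose 2 ≤ k * n :=
    (Nat.choose_le_pow k 2).trans (by rw [sq]; exact Nat.mul_le_mul_left k h)
  have : ((n + 1).choose 2 : ℚ) - (n - k + 1).choose 2 = k * n - k.choose 2 := by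
    push_cast [Nat.cast_choose_two, Nat.cast_sub h]
    ring
  exact_mod_cast this

theorem Sym2.toMultiset_injective {α : Type*} :
    Function.Injective (Sym2.toMultiset : Sym2 α → Multiset α) :=
  fun _ _ h => Sym2.ext fun x => by rw [← Sym2.mem_toMultiset, h, Sym2.mem_toMultiset]

theorem Finset.card_filter_exists_mem_sym2 {α : Type*} [Fintype α] [DecidableEq α]
    (s : Finset α) :
    #{z : Sym2 α | ∃ i ∈ z, i ∈ s} = #s * Fintype.card α - (#s).choose 2 := by
  have : ({z : Sym2 α | ∃ i ∈ z, i ∈ s} : Finset (Sym2 α)) = univ \ sᶜ.sym2 := by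
    ext z
    simp [mem_sym2_iff]
  rw [this, card_sdiff_of_subset (subset_univ _), card_univ, Sym2.card, card_sym2,
    card_compl, Nat.choose_succ_two_sub_choose_succ_two (card_le_univ s)]

namespace MvPolynomial

section LinearSubst

variable {σ R : Type*} [CommSemiring R]

noncomputable def linearSubst (L : Module.End R (homogeneousSubmodule σ R 1)) :
    MvPolynomial σ R →ₐ[R] MvPolynomial σ R :=
  aeval fun i => L ⟨X i, isHomogeneous_X R i⟩

@[simp]
theorem linearSubst_X (L : Module.End R (homogeneousSubmodule σ R 1)) (i : σ) :
    linearSubst L (X i) = L ⟨X i, isHomogeneous_X R i⟩ :=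
  aeval_X _ _

theorem linearSubst_coe (L : Module.End R (homogeneousSubmodule σ R 1))
    (v : homogeneousSubmodule σ R 1) : linearSubst L v = L v := by
  have hV : homogeneousSubmodule σ R 1 = span R (Set.range X) :=
    homogeneousSubmodule_one_eq_span_X
  obtain ⟨p, hp⟩ := v
  induction hV ▸ hp using Submodule.span_induction with
  | mem x hx =>
    obtain ⟨i, rfl⟩ := hx
    exact linearSubst_X L i
  | zero => exact (congrArg Subtype.val (map_zero L)).symm
  | add x y hx hy ihx ihy =>
    have hsum : (⟨x + y, hp⟩ : homogeneousSubmodule σ R 1) =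
        ⟨x, hV ▸ hx⟩ + ⟨y, hV ▸ hy⟩ := rfl
    rw [hsum, map_add L, Submodule.coe_add, Submodule.coe_add, map_add, ihx, ihy]
  | smul r x hx ihx =>
    have hsmul : (⟨r • x, hp⟩ : homogeneousSubmodule σ R 1) = r • ⟨x, hV ▸ hx⟩ := rfl
    rw [hsmul, map_smul L, Submodule.coe_smul, Submodule.coe_smul, map_smul, ihx]

theorem linearSubst_one :
    linearSubst (1 : Module.End R (homogeneousSubmodule σ R 1)) = AlgHom.id R _ :=
  algHom_ext fun i => by simp

theorem linearSubst_mul (L L' : Module.End R (homogeneousSubmodule σ R 1)) :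
    linearSubst (L * L') = (linearSubst L).comp (linearSubst L') :=
  algHom_ext fun i => by simp [linearSubst_coe]

theorem linearSubst_injective
    (L : homogeneousSubmodule σ R 1 ≃ₗ[R] homogeneousSubmodule σ R 1) :
    Function.Injective (linearSubst L.toLinearMap) := by
  refine Function.LeftInverse.injective (g := linearSubst L.symm.toLinearMap) fun p => ?_
  have h : L.symm.toLinearMap * L.toLinearMap = 1 := LinearMap.ext L.symm_apply_apply
  rw [← AlgHom.comp_apply, ← linearSubst_mul, h, linearSubst_one, AlgHom.id_apply]

theorem map_linearSubst (L : Module.End R (homogeneousSubmodule σ R 1))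
    (p : Submodule R (homogeneousSubmodule σ R 1)) :
    (p.map (homogeneousSubmodule σ R 1).subtype).map (linearSubst L).toLinearMap =
      (p.map L).map (homogeneousSubmodule σ R 1).subtype := by
  have h : (linearSubst L).toLinearMap ∘ₗ (homogeneousSubmodule σ R 1).subtype =
      (homogeneousSubmodule σ R 1).subtype ∘ₗ L :=
    LinearMap.ext (linearSubst_coe L)
  rw [← Submodule.map_comp, ← Submodule.map_comp, h]

end LinearSubst

section QuadraticMonomials

variable {σ : Type*} (R : Type*) [CommSemiring R]

noncomputable def sym2Monomial : Sym2 σ → MvPolynomial σ R :=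
  Sym2.lift ⟨fun i j => X i * X j, fun _ _ => mul_comm _ _⟩

@[simp]
theorem sym2Monomial_mk (i j : σ) : sym2Monomial R s(i, j) = X i * X j := rfl

theorem linearIndependent_sym2Monomial : LinearIndependent R (sym2Monomial (σ := σ) R) := by
  classical
  have h : sym2Monomial R = basisMonomials σ R ∘ Multiset.toFinsupp ∘ Sym2.toMultiset := by
    ext z : 1
    induction z with
    | h i j =>
      have : Multiset.toFinsupp s(i, j).toMultiset = Finsupp.single i 1 + Finsupp.single j 1 := by
        rw [← Multiset.toFinsupp_singleton, ← Multiset.toFinsupp_singleton,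
          ← Multiset.toFinsupp_add]
        rfl
      simp [coe_basisMonomials, this, X, monomial_mul]
  rw [h]
  exact (basisMonomials σ R).linearIndependent.comp _
    (Multiset.toFinsupp.injective.comp Sym2.toMultiset_injective)

theorem homogeneousSubmodule_one_mul_span_X (s : Set σ) :
    homogeneousSubmodule σ R 1 * span R (X '' s) =
      span R (sym2Monomial R '' {z | ∃ i ∈ z, i ∈ s}) := by
  rw [homogeneousSubmodule_one_eq_span_X, span_mul_span]
  congr 1
  ext p
  simp only [Set.mem_mul, Set.mem_range, Set.mem_image, Set.mem_ofPred_eq]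
  constructor
  · rintro ⟨_, ⟨i, rfl⟩, _, ⟨j, hj, rfl⟩, rfl⟩
    exact ⟨s(i, j), ⟨j, Sym2.mem_mk_right i j, hj⟩, sym2Monomial_mk R i j⟩
  · rintro ⟨z, ⟨i, hiz, hi⟩, rfl⟩
    obtain ⟨j, rfl⟩ := Sym2.mem_iff_exists.mp hiz
    exact ⟨X j, ⟨j, rfl⟩, X i, ⟨i, hi, rfl⟩, by rw [Sym2.eq_swap, sym2Monomial_mk]⟩

end QuadraticMonomials

section Finrank

variable {σ R : Type*} [CommRing R] [Nontrivial R]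

theorem finrank_span_X_image (s : Finset σ) :
    finrank R (span R ((X : σ → MvPolynomial σ R) '' s)) = #s := by
  rw [Set.image_eq_range]
  exact (finrank_span_eq_card ((linearIndependent_X σ R).comp _ Subtype.val_injective)).trans
    (Fintype.card_coe _)

variable [Fintype σ]

theorem finrank_homogeneousSubmodule_one :
    finrank R (homogeneousSubmodule σ R 1) = Fintype.card σ := by
  rw [homogeneousSubmodule_one_eq_span_X, finrank_span_eq_card (linearIndependent_X σ R)]

theorem finrank_homogeneousSubmodule_one_mul_span_X (s : Finset σ) :
    finrank R (homogeneousSubmodule σ R 1 * span R ((X : σ → MvPolynomial σ R) '' s)) =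
      #s * Fintype.card σ - (#s).choose 2 := by
  classical
  rw [homogeneousSubmodule_one_mul_span_X, ← card_filter_exists_mem_sym2,
    ← coe_filter_univ, Set.image_eq_range]
  exact (finrank_span_eq_card
    ((linearIndependent_sym2Monomial R).comp _ Subtype.val_injective)).trans (Fintype.card_coe _)

end Finrank

section Field

variable {σ K : Type*} [Field K] [Fintype σ]

theorem exists_map_linearSubst_span_X {H : Submodule K (MvPolynomial σ K)}
    (hH : H ≤ homogeneousSubmodule σ K 1) :
    ∃ (L : homogeneousSubmodule σ K 1 ≃ₗ[K] homogeneousSubmodule σ K 1) (s : Finset σ),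
      #s = finrank K H ∧
        (span K (X '' (s : Set σ))).map (linearSubst L.toLinearMap).toLinearMap = H := by
  have : FiniteDimensional K (homogeneousSubmodule σ K 1) :=
    Module.Finite.iff_fg.2 (homogeneousSubmodule_fg σ K 1)
  obtain ⟨s, -, hs⟩ := exists_subset_card_eq (s := (univ : Finset σ)) (n := finrank K H)
    (by rw [card_univ, ← finrank_homogeneousSubmodule_one (R := K)]; exact finrank_mono hH)
  have hW : span K ((X : σ → MvPolynomial σ K) '' s) ≤ homogeneousSubmodule σ K 1 :=
    span_le.2 fun _ ⟨i, _, hi⟩ => hi ▸ isHomogeneous_X K i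
  obtain ⟨L, hL⟩ := exists_linearEquiv_map_eq_of_finrank_eq
    (p := (span K (X '' (s : Set σ))).comap (homogeneousSubmodule σ K 1).subtype)
    (q := H.comap (homogeneousSubmodule σ K 1).subtype)
    (by rw [(comapSubtypeEquivOfLe hW).finrank_eq, (comapSubtypeEquivOfLe hH).finrank_eq,
      finrank_span_X_image, hs])
  refine ⟨L, s, hs, ?_⟩
  rw [← inf_eq_right.2 hW, ← map_comap_subtype, map_linearSubst, hL, map_comap_subtype,
    inf_eq_right.2 hH]

theorem finrank_homogeneousSubmodule_one_mul {H : Submodule K (MvPolynomial σ K)}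
    (hH : H ≤ homogeneousSubmodule σ K 1) :
    finrank K (homogeneousSubmodule σ K 1 * H) =
      finrank K H * Fintype.card σ - (finrank K H).choose 2 := by
  obtain ⟨L, s, hs, hLs⟩ := exists_map_linearSubst_span_X hH
  have hV : (homogeneousSubmodule σ K 1).map (linearSubst L.toLinearMap).toLinearMap =
      homogeneousSubmodule σ K 1 := by
    simpa using map_linearSubst L.toLinearMap ⊤
  have hmul : (homogeneousSubmodule σ K 1 * span K (X '' (s : Set σ))).map
      (linearSubst L.toLinearMap).toLinearMap = homogeneousSubmodule σ K 1 * H := by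
    rw [Submodule.map_mul, hV, hLs]
  rw [← hmul, ← hs, ← finrank_homogeneousSubmodule_one_mul_span_X (R := K)]
  exact (equivMapOfInjective _ (linearSubst_injective L) _).finrank_eq.symm

end Field

end MvPolynomial

open MvPolynomial

theorem dim_A1H_general (K : Type*) [Field K] (n k : ℕ)
    (H : Submodule K (MvPolynomial (Fin n) K))
    (hH : H ≤ homogeneousSubmodule (Fin n) K 1)
    (hk : Module.finrank K H = k) :
    Module.finrank K
        (homogeneousSubmodule (Fin n) K 1 * H :
          Submodule K (MvPolynomial (Fin n) K)) =
      k * n - k.choose 2 := by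
  rw [finrank_homogeneousSubmodule_one_mul hH, hk, Fintype.card_fin]

/-- If `H` is a `k`-dimensional subspace of `A_1` (where `dim A_1 = n`), then
`⟨A_1 H⟩ ≤ A_2` has dimension `kn - k.choose 2`. -/
theorem dim_A1H (K : Type*) [Field K] (n k : ℕ) (hn : 1 < n)
    (H : Submodule K (MvPolynomial (Fin n) K))
    (hH : H ≤ homogeneousSubmodule (Fin n) K 1)
    (hk : Module.finrank K H = k) :
    Module.finrank K
        (homogeneousSubmodule (Fin n) K 1 * H :
          Submodule K (MvPolynomial (Fin n) K)) =
      k * n - k.choose 2 :=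
  dim_A1H_general K n k H hH hk
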